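/- If the global dimension of A is finite, then for any self-orthogonal A-module T one has add^∧T = _T X = add^∼T; that is, every module admitting a possibly infinite add T-resolution admits a finite one. -/

import Mathlib

open CategoryTheory CategoryTheory.Limits ZeroObject

namespace CategoryTheory.Triangulated

open Pretriangulated

variable (C : Type*) [Category C] [HasZeroObject C] [HasShift C ℤ] [Preadditive C]
  [∀ n : ℤ, (shiftFunctor C n).Additive] [Pretriangulated C]

/-- Port of the removed Mathlib structure `Triangulated.Subcategory` (Dec 2024). -/
structure Subcategory where
  P : C → Prop
  zero' : ∃ (Z : C) (_ : IsZero Z), P Z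
  shift (X : C) (n : ℤ) : P X → P (X⟦n⟧)
  ext₂' (T : Triangle C) (_ : T ∈ distTriang C) :
    P T.obj₁ → P T.obj₃ → ObjectProperty.isoClosure P T.obj₂

namespace Subcategory

variable {C} (S : Subcategory C)

lemma zero [ObjectProperty.IsClosedUnderIsomorphisms S.P] : S.P 0 := by
  obtain ⟨X, hX, mem⟩ := S.zero'
  exact ObjectProperty.prop_of_iso _ hX.isoZero mem

lemma ext₂ [ObjectProperty.IsClosedUnderIsomorphisms S.P] (T : Triangle C)
    (hT : T ∈ distTriang C) (h₁ : S.P T.obj₁) (h₃ : S.P T.obj₃) : S.P T.obj₂ := by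
  obtain ⟨Y, hY, ⟨e⟩⟩ := S.ext₂' T hT h₁ h₃
  exact ObjectProperty.prop_of_iso _ e.symm hY

/-- The class of morphisms whose cone lies in `S`. -/
def W : MorphismProperty C := fun X Y f => ∃ (Z : C) (g : Y ⟶ Z) (h : Z ⟶ X⟦(1 : ℤ)⟧)
  (_ : Triangle.mk f g h ∈ distTriang C), S.P Z

end Subcategory

end CategoryTheory.Triangulated

noncomputable section

variable (k : Type) [Field k] (A : Type) [Ring A] [Algebra k A] [FiniteDimensional k A]
variable [HasDerivedCategory (ModuleCat A)]

/-- The canonical functor sending a module to the associated stalk complex in degree 0. -/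
def Db : ModuleCat A ⥤ DerivedCategory (ModuleCat A) :=
  DerivedCategory.singleFunctor _ 0

/-- `ExtVanish A M N` means `Ext^i_A(M,N) = 0` for all `i ≥ 1`, expressed via
morphisms `M ⟶ N⟦i⟧` in the derived category. -/
def ExtVanish (M N : ModuleCat A) : Prop :=
  ∀ (i : ℤ), 1 ≤ i → ∀ f : (Db A).obj M ⟶ ((Db A).obj N)⟦i⟧, f = 0

/-- membership in `add T`. -/
def MemAdd (T X : ModuleCat A) : Prop :=
  ∃ (n : ℕ) (Y : ModuleCat A), Nonempty ((X ⊞ Y) ≅ (⨁ fun _ : Fin n => T))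

/-- a morphism factors through `add T`. -/
def FactorsAdd (T : ModuleCat A) {M N : ModuleCat A} (f : M ⟶ N) : Prop :=
  ∃ (Z : ModuleCat A) (u : M ⟶ Z) (v : Z ⟶ N), MemAdd A T Z ∧ f = u ≫ v

/-- The thick (triangulated, closed under direct summands) subcategory of the derived
category generated by a set of objects. -/
def genThick (S₀ : Set (DerivedCategory (ModuleCat A))) :
    Triangulated.Subcategory (DerivedCategory (ModuleCat A)) where
  P X := ∀ (S : Triangulated.Subcategory (DerivedCategory (ModuleCat A))),
      ObjectProperty.IsClosedUnderIsomorphisms S.P → (∀ Y Z, S.P (Y ⊞ Z) → S.P Y) →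
      (∀ Y ∈ S₀, S.P Y) → S.P X
  zero' := ⟨0, isZero_zero _, fun S hS _ _ => S.zero⟩
  shift X n hX := fun S h1 h2 h3 => S.shift X n (hX S h1 h2 h3)
  ext₂' T hT h1 h3 := ⟨T.obj₂, fun S hS hsum hgen =>
    S.ext₂ T hT (h1 S hS hsum hgen) (h3 S hS hsum hgen), ⟨Iso.refl _⟩⟩

/-- the generators of `K^b(add T)` inside the derived category. -/
def addTSet (T : ModuleCat A) : Set (DerivedCategory (ModuleCat A)) :=
  {X | ∃ M : ModuleCat A, MemAdd A T M ∧ X = (Db A).obj M}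

/-- `K^b(add T)` as a thick subcategory of the derived category. -/
def KbAdd (T : ModuleCat A) : Triangulated.Subcategory (DerivedCategory (ModuleCat A)) :=
  genThick A (addTSet A T)

/-- The Verdier quotient `D^b(A)/K^b(add T)`. -/
def DbQuot (T : ModuleCat A) := (KbAdd A T).W.Localization

instance (T : ModuleCat A) : Category (DbQuot A T) := by
  dsimp [DbQuot]; infer_instance

/-- The composition `A-mod → D^b(A) → D^b(A)/K^b(add T)`. -/
def toQuot (T : ModuleCat A) : ModuleCat A ⥤ DbQuot A T :=
  Db A ⋙ (KbAdd A T).W.Q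

end

noncomputable section
variable (k : Type) [Field k] (A : Type) [Ring A] [Algebra k A] [FiniteDimensional k A]
variable [HasDerivedCategory (ModuleCat A)]

/-- `X ∈ add^∼T`: there is a (possibly infinite) exact `add T`-resolution
`⋯ → T^{-1} → T^0 → X → 0`. -/
def MemAddResolve (T X : ModuleCat A) : Prop :=
  ∃ (C : ℕ → ModuleCat A) (d : ∀ n, C (n + 1) ⟶ C n) (ε : C 0 ⟶ X),
    (∀ n, MemAdd A T (C n)) ∧ Function.Surjective ε ∧
    Function.Exact (d 0) ε ∧ ∀ n, Function.Exact (d (n + 1)) (d n)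

/-- `X ∈ add^∧T`: there is a finite exact `add T`-resolution
`0 → T^{-n} → ⋯ → T^0 → X → 0`. -/
def MemAddWedge (T X : ModuleCat A) : Prop :=
  ∃ (m : ℕ) (C : ℕ → ModuleCat A) (d : ∀ n, C (n + 1) ⟶ C n) (ε : C 0 ⟶ X),
    (∀ n, MemAdd A T (C n)) ∧ Function.Surjective ε ∧
    Function.Exact (d 0) ε ∧ (∀ n, Function.Exact (d (n + 1)) (d n)) ∧
    ∀ n, m < n → Subsingleton (C n)

/-- `X ∈ _T X`: there is an exact `add T`-resolution `⋯ → T^{-1} → T^0 → X → 0`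
all of whose kernels lie in `T^⊥`. -/
def MemTX (T X : ModuleCat A) : Prop :=
  ∃ (C : ℕ → ModuleCat A) (d : ∀ n, C (n + 1) ⟶ C n) (ε : C 0 ⟶ X),
    (∀ n, MemAdd A T (C n)) ∧ Function.Surjective ε ∧
    Function.Exact (d 0) ε ∧ (∀ n, Function.Exact (d (n + 1)) (d n)) ∧
    ExtVanish A T (kernel ε) ∧ ∀ n, ExtVanish A T (kernel (d n))

end

/-!
Let `K j` be the syzygies of an `add T`-resolution `⋯ → C 1 → C 0 → X → 0`, so that `K 0 = X` and
`0 → K (j + 1) → C j → K j → 0` is exact. As `Ext^{≥1}(T, add T) = 0`, dimension shifting gives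
`Ext^p(T, K (j + 1)) ≅ Ext^(p + k)(T, K (j + k + 1))`, which vanishes for `k` beyond the global
dimension `n`; hence all kernels lie in `T^⊥`. Dually, for `N ∈ T^⊥`,
`Ext^1(K n, N) ≅ Ext^(n + 1)(X, N) = 0`; with `N = K (n + 1)` the sequence
`0 → K (n + 1) → C n → K n → 0` splits, so `K n ∈ add T` and
`0 → K n → C (n - 1) → ⋯ → C 0 → X → 0` is a finite `add T`-resolution.
-/

open Abelian

namespace CategoryTheory

variable {C : Type*} [Category C] [Abelian C] [HasExt C]

namespace Abelian.Ext

lemma eq_zero_of_biproduct_right {J : Type*} [Fintype J] {M : C} {Y : J → C} [HasBiproduct Y]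
    {p : ℕ} (h : ∀ j, ∀ e : Ext M (Y j) p, e = 0) (e : Ext M (⨁ Y) p) : e = 0 :=
  (addEquivBiproduct M (biproduct.isBilimit Y) p).map_eq_zero_iff.1 (funext fun j => h j _)

lemma eq_zero_of_biproduct_left {J : Type*} [Fintype J] {X : J → C} [HasBiproduct X] {N : C}
    {p : ℕ} (h : ∀ j, ∀ e : Ext (X j) N p, e = 0) (e : Ext (⨁ X) N p) : e = 0 :=
  (biproductAddEquiv (biproduct.isBilimit X) N p).map_eq_zero_iff.1 (funext fun j => h j _)

end Abelian.Ext

lemma Retract.ext_eq_zero_right {Z W : C} (h : Retract Z W) {M : C} {p : ℕ}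
    (hW : ∀ e : Ext M W p, e = 0) (e : Ext M Z p) : e = 0 := by
  rw [← e.comp_mk₀_id, ← h.retract, ← Ext.mk₀_comp_mk₀, ← Ext.comp_assoc_of_second_deg_zero,
    hW (e.comp _ _), Ext.zero_comp]

lemma Retract.ext_eq_zero_left {Z W : C} (h : Retract Z W) {N : C} {p : ℕ}
    (hW : ∀ e : Ext W N p, e = 0) (e : Ext Z N p) : e = 0 := by
  rw [← e.mk₀_id_comp, ← h.retract, ← Ext.mk₀_comp_mk₀_assoc, hW (Ext.comp _ _ _),
    Ext.comp_zero]

namespace ShortComplex.ShortExact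

variable {S : ShortComplex C} (hS : S.ShortExact)
include hS

lemma ext_to_X₃_eq_zero {M : C} {p : ℕ} (h₂ : ∀ e : Ext M S.X₂ p, e = 0)
    (h₁ : ∀ e : Ext M S.X₁ (p + 1), e = 0) (e : Ext M S.X₃ p) : e = 0 := by
  obtain ⟨e₂, rfl⟩ := Ext.covariant_sequence_exact₃ M hS e rfl (h₁ _)
  rw [h₂ e₂, Ext.zero_comp]

lemma ext_from_X₁_eq_zero {N : C} {p : ℕ} (h₂ : ∀ e : Ext S.X₂ N p, e = 0)
    (h₃ : ∀ e : Ext S.X₃ N (p + 1), e = 0) (e : Ext S.X₁ N p) : e = 0 := by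
  obtain ⟨e₂, rfl⟩ := Ext.contravariant_sequence_exact₁ hS N e (add_comm 1 p) (h₃ _)
  rw [h₂ e₂, Ext.comp_zero]

lemma exists_section_of_ext_eq_zero (h : ∀ e : Ext S.X₃ S.X₁ 1, e = 0) :
    ∃ s : S.X₃ ⟶ S.X₂, s ≫ S.g = 𝟙 S.X₃ := by
  obtain ⟨e, he⟩ := Ext.covariant_sequence_exact₃ S.X₃ hS (Ext.mk₀ (𝟙 S.X₃)) (zero_add 1) (h _)
  refine ⟨Ext.homEquiv₀ e, (Ext.mk₀_bijective _ _).1 ?_⟩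
  rw [← Ext.mk₀_comp_mk₀, Ext.mk₀_homEquiv₀_apply, he]

lemma nonempty_splitting_of_ext_eq_zero (h : ∀ e : Ext S.X₃ S.X₁ 1, e = 0) :
    Nonempty S.Splitting :=
  let ⟨s, hs⟩ := hS.exists_section_of_ext_eq_zero h
  ⟨Splitting.ofExactOfSection S hS.exact s hs hS.mono_f⟩

end ShortComplex.ShortExact

end CategoryTheory

section AddResolutions

variable {A : Type} [Ring A] {T : ModuleCat A}

lemma MemAdd.exists_retract {Z : ModuleCat A} (h : MemAdd A T Z) :
    ∃ r : ℕ, Nonempty (Retract Z (⨁ fun _ : Fin r => T)) := by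
  obtain ⟨r, Y, ⟨e⟩⟩ := h
  exact ⟨r, ⟨⟨biprod.inl ≫ e.hom, e.inv ≫ biprod.fst, by simp⟩⟩⟩

lemma MemAdd.ext_eq_zero_right {Z : ModuleCat A} (hZ : MemAdd A T Z) {M : ModuleCat A}
    {p : ℕ} (h : ∀ e : Ext M T p, e = 0) (e : Ext M Z p) : e = 0 :=
  let ⟨_, ⟨hr⟩⟩ := hZ.exists_retract
  hr.ext_eq_zero_right (Ext.eq_zero_of_biproduct_right fun _ => h) e

lemma MemAdd.ext_eq_zero_left {Z : ModuleCat A} (hZ : MemAdd A T Z) {N : ModuleCat A}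
    {p : ℕ} (h : ∀ e : Ext T N p, e = 0) (e : Ext Z N p) : e = 0 :=
  let ⟨_, ⟨hr⟩⟩ := hZ.exists_retract
  hr.ext_eq_zero_left (Ext.eq_zero_of_biproduct_left fun _ => h) e

lemma memAdd_of_isZero {Z : ModuleCat A} (hZ : IsZero Z) : MemAdd A T Z := by
  refine ⟨0, Z, ⟨IsZero.iso ((biprod_isZero_iff _ _).2 ⟨hZ, hZ⟩) ?_⟩⟩
  rw [IsZero.iff_id_eq_zero, ← biproduct.total]
  simp

lemma MemAdd.of_splitting {S : ShortComplex (ModuleCat A)} (sp : S.Splitting)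
    (h : MemAdd A T S.X₂) : MemAdd A T S.X₃ := by
  obtain ⟨r, Y, ⟨e⟩⟩ := h
  refine ⟨r, S.X₁ ⊞ Y, ⟨?_⟩⟩
  calc S.X₃ ⊞ (S.X₁ ⊞ Y) ≅ (S.X₃ ⊞ S.X₁) ⊞ Y := (biprod.associator _ _ _).symm
    _ ≅ (S.X₁ ⊞ S.X₃) ⊞ Y := biprod.mapIso (biprod.braiding _ _) (Iso.refl Y)
    _ ≅ S.X₂ ⊞ Y := biprod.mapIso sp.isoBinaryBiproduct.symm (Iso.refl Y)
    _ ≅ _ := e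

lemma memAddWedge_punit : MemAddWedge A T (ModuleCat.of A PUnit) :=
  ⟨0, fun _ => ModuleCat.of A PUnit, fun _ => 0, 0,
    fun _ => memAdd_of_isZero (ModuleCat.isZero_of_subsingleton _),
    fun _ => ⟨0, Subsingleton.elim _ _⟩,
    fun _ => ⟨fun _ => ⟨0, Subsingleton.elim _ _⟩, fun _ => rfl⟩,
    fun _ _ => ⟨fun _ => ⟨0, Subsingleton.elim _ _⟩, fun _ => rfl⟩,
    fun _ _ => inferInstanceAs (Subsingleton PUnit)⟩

lemma CategoryTheory.ShortComplex.ShortExact.memAddWedge_X₃ {S : ShortComplex (ModuleCat A)}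
    (hS : S.ShortExact) (h₁ : MemAddWedge A T S.X₁) (h₂ : MemAdd A T S.X₂) :
    MemAddWedge A T S.X₃ := by
  obtain ⟨m, C, d, ε, hC, hε, h₀, hd, hm⟩ := h₁
  have hfg : Function.Exact S.f S.g :=
    (ShortComplex.ShortExact.moduleCat_exact_iff_function_exact S).1 hS.exact
  let C' : ℕ → ModuleCat A
    | 0 => S.X₂
    | j + 1 => C j
  let d' : ∀ j, C' (j + 1) ⟶ C' j
    | 0 => ε ≫ S.f
    | j + 1 => d j
  refine ⟨m + 1, C', d', S.g, fun | 0 => h₂ | j + 1 => hC j, hS.moduleCat_surjective_g,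
    fun y => ?_, fun | 0 => ?_ | j + 1 => hd j,
    fun | 0, h => by omega | j + 1, h => hm j (by omega)⟩
  · change _ ↔ y ∈ Set.range (S.f ∘ ε)
    rw [hfg y, hε.range_comp]
  · exact h₀.comp_injective _ hS.moduleCat_injective_f (map_zero S.f.hom)

lemma MemAdd.memAddWedge {X : ModuleCat A} (h : MemAdd A T X) : MemAddWedge A T X := by
  let S := ShortComplex.mk (0 : ModuleCat.of A PUnit ⟶ X) (𝟙 X) (by simp)
  have hS : S.ShortExact := ModuleCat.shortComplex_shortExact _
    (fun _ => ⟨fun h => ⟨0, h.symm⟩, fun ⟨_, h⟩ => h.symm⟩) (fun _ _ _ => Subsingleton.elim _ _)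
    Function.surjective_id
  exact hS.memAddWedge_X₃ memAddWedge_punit h

end AddResolutions

section Syzygies

variable {A : Type} [Ring A]

structure ExactResolution (X : ModuleCat A) where
  obj : ℕ → ModuleCat A
  d : ∀ n, obj (n + 1) ⟶ obj n
  ε : obj 0 ⟶ X
  surjective_ε : Function.Surjective ε
  exact_zero : Function.Exact (d 0) ε
  exact_succ : ∀ n, Function.Exact (d (n + 1)) (d n)

namespace ExactResolution

variable {X : ModuleCat A} (R : ExactResolution X)

def kerSubmodule : ∀ j, Submodule A (R.obj j)
  | 0 => LinearMap.ker R.ε.hom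
  | j + 1 => LinearMap.ker (R.d j).hom

lemma kerSubmodule_eq_range (j : ℕ) : R.kerSubmodule j = LinearMap.range (R.d j).hom := by
  cases j with
  | zero => exact LinearMap.exact_iff.1 R.exact_zero
  | succ j => exact LinearMap.exact_iff.1 (R.exact_succ j)

/-- Indexed so that `0 → syzygy (j + 1) → obj j → syzygy j → 0` is exact for every `j`. -/
def syzygy : ℕ → ModuleCat A
  | 0 => X
  | j + 1 => ModuleCat.of A (R.kerSubmodule j)

def toSyzygy : ∀ j, R.obj j ⟶ R.syzygy j
  | 0 => R.ε
  | j + 1 => ModuleCat.ofHom ((R.d j).hom.codRestrict _ fun x =>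
      (R.kerSubmodule_eq_range j).symm ▸ LinearMap.mem_range_self _ x)

lemma ker_toSyzygy (j : ℕ) : LinearMap.ker (R.toSyzygy j).hom = R.kerSubmodule j := by
  cases j with
  | zero => rfl
  | succ j => exact LinearMap.ker_codRestrict _ _ _

lemma surjective_toSyzygy (j : ℕ) : Function.Surjective (R.toSyzygy j) := by
  cases j with
  | zero => exact R.surjective_ε
  | succ j =>
    rintro ⟨y, hy⟩
    obtain ⟨x, rfl⟩ := (R.kerSubmodule_eq_range j) ▸ hy
    exact ⟨x, rfl⟩

def syzygyShortComplex (j : ℕ) : ShortComplex (ModuleCat A) :=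
  ShortComplex.mk (X₁ := R.syzygy (j + 1)) (ModuleCat.ofHom (R.kerSubmodule j).subtype)
    (R.toSyzygy j) (by ext x; exact (R.ker_toSyzygy j).ge x.2)

lemma syzygyShortComplex_shortExact (j : ℕ) : (R.syzygyShortComplex j).ShortExact := by
  refine ModuleCat.shortComplex_shortExact _ (fun x => ?_) Subtype.val_injective
    (R.surjective_toSyzygy j)
  change x ∈ LinearMap.ker (R.toSyzygy j).hom ↔ x ∈ LinearMap.range (R.kerSubmodule j).subtype
  rw [ker_toSyzygy, Submodule.range_subtype]

end ExactResolution

end Syzygies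

namespace ExactResolution

variable {A : Type} [Ring A] {T X : ModuleCat A} (R : ExactResolution X)
  (hR : ∀ j, MemAdd A T (R.obj j)) {n : ℕ}
  (hgl : ∀ (M N : ModuleCat A) (p : ℕ), n < p → ∀ e : Ext M N p, e = 0)
include hR hgl

/-- Dimension shifting: `Ext^p(T, syzygy (j + 1)) ≅ Ext^(p + k)(T, syzygy (j + k + 1))`. -/
lemma ext_to_syzygy_eq_zero (hT : ∀ p, 1 ≤ p → ∀ e : Ext T T p, e = 0) (j p : ℕ) (hp : 1 ≤ p)
    (e : Ext T (R.syzygy (j + 1)) p) : e = 0 := by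
  suffices ∀ k j p, 1 ≤ p → n < p + k → ∀ e : Ext T (R.syzygy (j + 1)) p, e = 0 from
    this n j p hp (by omega) e
  intro k
  induction k with
  | zero => exact fun j p _ hpn => hgl _ _ p hpn
  | succ k ih =>
    intro j p hp hpk
    exact (R.syzygyShortComplex_shortExact (j + 1)).ext_to_X₃_eq_zero
      ((hR (j + 1)).ext_eq_zero_right (hT p hp)) (ih (j + 1) (p + 1) (by omega) (by omega))

/-- Dimension shifting: `Ext^p(syzygy j, N) ≅ Ext^(p + j)(X, N)` for `N ∈ T^⊥`. -/
lemma ext_from_syzygy_eq_zero {N : ModuleCat A} (hN : ∀ p, 1 ≤ p → ∀ e : Ext T N p, e = 0)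
    (j p : ℕ) (hp : 1 ≤ p) (hpj : n < p + j) (e : Ext (R.syzygy j) N p) : e = 0 := by
  induction j generalizing p with
  | zero => exact hgl _ _ p hpj e
  | succ j ih =>
    exact (R.syzygyShortComplex_shortExact j).ext_from_X₁_eq_zero
      ((hR j).ext_eq_zero_left (hN p hp)) (ih (p + 1) (by omega) (by omega)) e

lemma memAdd_syzygy (hT : ∀ p, 1 ≤ p → ∀ e : Ext T T p, e = 0) : MemAdd A T (R.syzygy n) :=
  let ⟨sp⟩ := (R.syzygyShortComplex_shortExact n).nonempty_splitting_of_ext_eq_zero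
    (R.ext_from_syzygy_eq_zero hR hgl (R.ext_to_syzygy_eq_zero hR hgl hT n) n 1 le_rfl (by omega))
  (hR n).of_splitting sp

lemma memAddWedge (hT : ∀ p, 1 ≤ p → ∀ e : Ext T T p, e = 0) : MemAddWedge A T X := by
  have hsyz : ∀ j ≤ n, MemAddWedge A T (R.syzygy j) := fun _ hj =>
    Nat.decreasingInduction
      (fun j _ h => (R.syzygyShortComplex_shortExact j).memAddWedge_X₃ h (hR j))
      (R.memAdd_syzygy hR hgl hT).memAddWedge hj
  exact hsyz 0 n.zero_le

end ExactResolution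

section DerivedCategoryComparison

universe v w

variable {A : Type} [Ring A] [HasDerivedCategory.{w} (ModuleCat.{v} A)]

lemma CategoryTheory.Abelian.Ext.eq_zero_of_forall_hom_eq_zero {M N : ModuleCat.{v} A} {i : ℕ}
    (h : ∀ f : (Db A).obj M ⟶ ((Db A).obj N)⟦(i : ℤ)⟧, f = 0) (e : Ext M N i) : e = 0 :=
  Ext.ext ((h e.hom).trans (Ext.zero_hom M N i).symm)

lemma extVanish_iff {M N : ModuleCat.{v} A} :
    ExtVanish A M N ↔ ∀ i : ℕ, 1 ≤ i → ∀ e : Ext M N i, e = 0 := by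
  refine ⟨fun h i hi => Ext.eq_zero_of_forall_hom_eq_zero (h i (by exact_mod_cast hi)),
    fun h i hi f => ?_⟩
  lift i to ℕ using (by omega)
  let e : Ext M N i := Ext.homEquiv.symm f
  have he : e.hom = 0 := by rw [h i (by exact_mod_cast hi) e, Ext.zero_hom]
  exact (Ext.homEquiv.apply_symm_apply f).symm.trans he

lemma ExtVanish.of_iso {M N N' : ModuleCat.{v} A} (h : ExtVanish A M N) (e : N ≅ N') :
    ExtVanish A M N' :=
  extVanish_iff.2 fun i hi => e.symm.retract.ext_eq_zero_right (extVanish_iff.1 h i hi)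

end DerivedCategoryComparison

noncomputable section
variable (k : Type) [Field k] (A : Type) [Ring A] [Algebra k A] [FiniteDimensional k A]
variable [HasDerivedCategory (ModuleCat A)]

/-- `A` has finite global dimension, expressed via uniform `Ext`-vanishing. -/
def FinGlobalDim : Prop :=
  ∃ n : ℕ, ∀ (M N : ModuleCat A) (i : ℤ), (n : ℤ) < i →
    ∀ f : (Db A).obj M ⟶ ((Db A).obj N)⟦i⟧, f = 0

theorem stmt_17 (hgl : FinGlobalDim A) (T : ModuleCat A)
    (hT : ExtVanish A T T) :
    ∀ X : ModuleCat A,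
      (MemAddResolve A T X ↔ MemTX A T X) ∧
      (MemAddResolve A T X ↔ MemAddWedge A T X) := by
  obtain ⟨n, hn⟩ := hgl
  have hn' : ∀ (M N : ModuleCat A) (p : ℕ), n < p → ∀ e : Ext M N p, e = 0 :=
    fun M N p hp => Ext.eq_zero_of_forall_hom_eq_zero (hn M N p (by exact_mod_cast hp))
  have hT' := extVanish_iff.1 hT
  intro X
  refine ⟨⟨fun ⟨C, d, ε, hC, hε, h₀, hd⟩ => ?_, fun ⟨C, d, ε, hC, hε, h₀, hd, _⟩ =>
      ⟨C, d, ε, hC, hε, h₀, hd⟩⟩,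
    ⟨fun ⟨C, d, ε, hC, hε, h₀, hd⟩ => ?_, fun ⟨_, C, d, ε, hC, hε, h₀, hd, _⟩ =>
      ⟨C, d, ε, hC, hε, h₀, hd⟩⟩⟩
  · let R : ExactResolution X := ⟨C, d, ε, hε, h₀, hd⟩
    have hK (j : ℕ) : ExtVanish A T (R.syzygy (j + 1)) :=
      extVanish_iff.2 (R.ext_to_syzygy_eq_zero hC hn' hT' j)
    exact ⟨C, d, ε, hC, hε, h₀, hd, (hK 0).of_iso (ModuleCat.kernelIsoKer ε).symm,
      fun j => (hK (j + 1)).of_iso (ModuleCat.kernelIsoKer (d j)).symm⟩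
  · exact ExactResolution.memAddWedge ⟨C, d, ε, hε, h₀, hd⟩ hC hn' hT'

end
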